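/- Let m ≥ 1 and let ∞ > s₁ ≥ s₂ ≥ ⋯ ≥ s_m ≥ 0 be real numbers. Then ∏_{k=1}^{m} e^{−s_k²/2} · ∏_{1≤j<k≤m} (s_j² − s_k²) · [ ∫_{s₁}^{∞} dt₁ ∫_{s₂}^{s₁} dt₂ ⋯ ∫_{s_m}^{s_{m−1}} dt_m ∏_{k=1}^{m} t_k e^{−t_k²/2} · ∏_{1≤j<k≤m} (t_j² − t_k²) ] = ∏_{k=1}^{m} e^{−s_k²} · ∏_{1≤j<k≤m} (s_j² − s_k²)². -/

import Mathlib

/-!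
With `ψ_j(x) = (-x²)ʲ x e^{-x²/2}`, the odd factor is the determinant `det [ψ_j(t_i)]`
(a Vandermonde determinant in `-t²`), so integrating it over the box `∏ (s_{i+1}, s_i)`,
`s_0 = ∞`, integrates each row separately. Since `r + 2r' = Xʲ` has a monic solution `r_j`
of degree `j`, `R_j(x) = r_j(-x²) e^{-x²/2}` is the tail integral `∫_x^∞ ψ_j`, and row `i`
becomes `R_j(s_{i+1}) - R_j(s_i)`. Adding up the rows telescopes this to `det [R_j(s_{i+1})]`,
which is again `∏ e^{-s_i²/2} · Δ(s²)` by Vandermonde; multiplying by the even factor gives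
the square.
-/

open MeasureTheory Polynomial Filter Set Topology

theorem setIntegral_univ_pi_det {ι α 𝕜 : Type*} [Fintype ι] [DecidableEq ι] [RCLike 𝕜]
    [MeasureSpace α] [SigmaFinite (volume : Measure α)]
    (I : ι → Set α) (f : ι → α → 𝕜)
    (hf : ∀ i j, IntegrableOn (f j) (I i)) :
    ∫ t in univ.pi I, (Matrix.of fun i j => f j (t i)).det =
      (Matrix.of fun i j => ∫ x in I i, f j x).det := by
  have hpi : (volume : Measure (ι → α)).restrict (univ.pi I) =
      Measure.pi fun i => volume.restrict (I i) := by
    rw [volume_pi, Measure.restrict_pi_pi]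
  simp_rw [← Matrix.det_transpose (Matrix.of _), Matrix.det_apply, Matrix.transpose_apply,
    Matrix.of_apply, Units.smul_def, zsmul_eq_mul]
  rw [hpi, integral_finsetSum _ fun σ _ =>
    (Integrable.fintype_prod fun i => (hf i (σ i)).integrable).const_mul _]
  refine Finset.sum_congr rfl fun σ _ => ?_
  rw [integral_const_mul, integral_fintype_prod_eq_prod (fun i x => f (σ i) x)]

theorem Matrix.det_of_sub_succ {R : Type*} [CommRing R] {m : ℕ} (g : ℕ → Fin m → R)
    (hg : g 0 = 0) :
    (Matrix.of fun i j : Fin m => g (i + 1) j - g i j).det =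
      (Matrix.of fun i j : Fin m => g (i + 1) j).det := by
  set L : Matrix (Fin m) (Fin m) R := Matrix.of fun i i' => if i' ≤ i then 1 else 0
  have hL : L.det = 1 := by
    rw [Matrix.det_of_isLowerTriangular L fun i j hij => if_neg (not_le.mpr hij)]
    simp [L]
  have hcumsum : L * (Matrix.of fun i j : Fin m => g (i + 1) j - g i j) =
      Matrix.of fun i j : Fin m => g (i + 1) j := by
    ext i j
    simp only [L, Matrix.mul_apply, Matrix.of_apply, ite_mul, one_mul, zero_mul]
    have htelescope := Finset.sum_map (Finset.Iic i) Fin.valEmbedding fun n => g (n + 1) j - g n j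
    rw [Fin.map_valEmbedding_Iic, ← Nat.range_succ_eq_Iic, Finset.sum_range_sub (g · j), hg]
      at htelescope
    rw [← Finset.sum_filter, Finset.filter_ge_eq_Iic]
    simpa using htelescope.symm
  rw [← hcumsum, Matrix.det_mul, hL, one_mul]

theorem prod_Iio_sub_eq_det_vandermonde {R : Type*} [CommRing R] {m : ℕ} (v : Fin m → R) :
    ∏ k, ∏ j ∈ Finset.Iio k, (v j - v k) = (Matrix.vandermonde (-v)).det := by
  rw [Matrix.det_vandermonde]
  simp only [Pi.neg_apply, neg_sub_neg]
  exact Finset.prod_comm' fun k j => by simp [and_comm]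

theorem Finset.prod_Icc_one_eq_prod_fin {M : Type*} [CommMonoid M] (m : ℕ) (f : ℕ → M) :
    ∏ k ∈ Finset.Icc 1 m, f k = ∏ k : Fin m, f (k + 1) := by
  rw [Fin.prod_univ_eq_prod_range (fun k => f (k + 1)), ← Finset.Ico_add_one_right_eq_Icc,
    Finset.prod_Ico_eq_prod_range]
  simp [add_comm]

theorem Finset.prod_Icc_one_prod_Ico_one_eq_prod_fin {M : Type*} [CommMonoid M] (m : ℕ)
    (F : ℕ → ℕ → M) :
    ∏ k ∈ Finset.Icc 1 m, ∏ j ∈ Finset.Ico 1 k, F j k =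
      ∏ k : Fin m, ∏ j ∈ Finset.Iio k, F (j + 1) (k + 1) := by
  rw [Finset.prod_Icc_one_eq_prod_fin]
  refine Finset.prod_congr rfl fun k _ => ?_
  have hreindex := Finset.prod_map (Finset.Iio k) Fin.valEmbedding fun j => F (j + 1) (k + 1)
  rw [Fin.map_valEmbedding_Iio, Nat.Iio_eq_range] at hreindex
  rw [Finset.prod_Ico_eq_prod_range]
  simpa [add_comm] using hreindex

noncomputable def oddGaussPoly : ℕ → ℝ[X]
  | 0 => 1
  | n + 1 => X ^ (n + 1) - C (2 * (n + 1 : ℝ)) * oddGaussPoly n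

theorem oddGaussPoly_add_two_mul_derivative :
    ∀ n, oddGaussPoly n + C 2 * derivative (oddGaussPoly n) = X ^ n
  | 0 => by simp [oddGaussPoly]
  | n + 1 => by
    have ih := oddGaussPoly_add_two_mul_derivative n
    rw [oddGaussPoly, derivative_sub, derivative_C_mul, derivative_X_pow]
    simp only [C_mul, C_add, C_1, Nat.cast_add, Nat.cast_one, map_natCast, add_tsub_cancel_right]
    linear_combination (-(C 2 * ((n : ℝ[X]) + 1))) * ih

theorem natDegree_oddGaussPoly : ∀ n, (oddGaussPoly n).natDegree = n
  | 0 => natDegree_one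
  | n + 1 => by
    have hlt :
        natDegree (C (2 * (n + 1 : ℝ)) * oddGaussPoly n) < natDegree (X ^ (n + 1) : ℝ[X]) := by
      rw [natDegree_X_pow]
      exact (natDegree_C_mul_le _ _).trans_lt (by rw [natDegree_oddGaussPoly n]; omega)
    rw [oddGaussPoly, natDegree_sub_eq_left_of_natDegree_lt hlt, natDegree_X_pow]

theorem monic_oddGaussPoly : ∀ n, (oddGaussPoly n).Monic
  | 0 => monic_one
  | n + 1 => (monic_X_pow _).sub_of_left <| degree_lt_degree <| by
    rw [natDegree_X_pow]
    exact (natDegree_C_mul_le _ _).trans_lt (by rw [natDegree_oddGaussPoly n]; omega)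

noncomputable def oddGauss (j : ℕ) (x : ℝ) : ℝ := (-x ^ 2) ^ j * (x * Real.exp (-x ^ 2 / 2))

noncomputable def oddGaussTail (j : ℕ) (x : ℝ) : ℝ :=
  (oddGaussPoly j).eval (-x ^ 2) * Real.exp (-x ^ 2 / 2)

theorem hasDerivAt_oddGaussTail (j : ℕ) (x : ℝ) :
    HasDerivAt (oddGaussTail j) (-oddGauss j x) x := by
  have hsq : HasDerivAt (fun y : ℝ => -y ^ 2) (-(2 * x)) x := by
    have h := (hasDerivAt_pow 2 x).neg
    simp only [Nat.cast_ofNat, Nat.add_one_sub_one, pow_one] at h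
    exact h
  have hpoly := ((oddGaussPoly j).hasDerivAt (-x ^ 2)).comp x hsq
  have hexp := (Real.hasDerivAt_exp (-x ^ 2 / 2)).comp x (hsq.div_const 2)
  have hkey := congrArg (eval (-x ^ 2)) (oddGaussPoly_add_two_mul_derivative j)
  simp only [eval_add, eval_mul, eval_C, eval_pow, eval_X] at hkey
  refine (hpoly.mul hexp).congr_deriv ?_
  simp only [Function.comp_apply, oddGauss]
  linear_combination (-x * Real.exp (-x ^ 2 / 2)) * hkey

theorem tendsto_oddGaussTail_atTop (j : ℕ) : Tendsto (oddGaussTail j) atTop (𝓝 0) := by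
  have hsq : Tendsto (fun x : ℝ => x ^ 2 / 2) atTop atTop :=
    (tendsto_pow_atTop two_ne_zero).atTop_div_const two_pos
  refine ((tendsto_div_exp_atTop ((oddGaussPoly j).comp (-C 2 * X))).comp hsq).congr fun x => ?_
  simp only [Function.comp_apply, eval_comp, eval_mul, eval_neg, eval_C, eval_X, oddGaussTail,
    div_eq_mul_inv, ← Real.exp_neg]
  ring_nf

theorem integrable_oddGauss (j : ℕ) : Integrable (oddGauss j) := by
  have h := (integrable_rpow_mul_exp_neg_mul_sq (b := 1 / 2) one_half_pos
    (s := (2 * j + 1 : ℕ)) (neg_one_lt_zero.trans_le (Nat.cast_nonneg _))).const_mul ((-1) ^ j)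
  refine h.congr (Eventually.of_forall fun x => ?_)
  simp only [Real.rpow_natCast, oddGauss, neg_pow (x ^ 2), ← pow_mul]
  ring_nf

theorem integral_Ioi_oddGauss (j : ℕ) (a : ℝ) :
    ∫ x in Ioi a, oddGauss j x = oddGaussTail j a := by
  have hderiv (x : ℝ) : HasDerivAt (-oddGaussTail j) (oddGauss j x) x := by
    simpa using (hasDerivAt_oddGaussTail j x).neg
  rw [integral_Ioi_of_hasDerivAt_of_tendsto' (fun x _ => hderiv x)
    (integrable_oddGauss j).integrableOn
    (neg_zero (G := ℝ) ▸ (tendsto_oddGaussTail_atTop j).neg)]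
  simp

theorem det_oddGauss {m : ℕ} (t : Fin m → ℝ) :
    (Matrix.of fun i j : Fin m => oddGauss j (t i)).det =
      (∏ k, t k * Real.exp (-(t k) ^ 2 / 2)) *
        ∏ k, ∏ j ∈ Finset.Iio k, ((t j) ^ 2 - (t k) ^ 2) := by
  rw [prod_Iio_sub_eq_det_vandermonde, ← Matrix.det_mul_column]
  congr 1 with i j
  exact mul_comm _ _

theorem det_oddGaussTail {m : ℕ} (x : Fin m → ℝ) :
    (Matrix.of fun i j : Fin m => oddGaussTail j (x i)).det =
      (∏ k, Real.exp (-(x k) ^ 2 / 2)) *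
        ∏ k, ∏ j ∈ Finset.Iio k, ((x j) ^ 2 - (x k) ^ 2) := by
  rw [prod_Iio_sub_eq_det_vandermonde, Matrix.det_eval_matrixOfPolynomials_eq_det_vandermonde _
    (fun j => oddGaussPoly j) (fun j => natDegree_oddGaussPoly j)
    (fun j => monic_oddGaussPoly j), ← Matrix.det_mul_column]
  congr 1 with i j
  exact mul_comm _ _

theorem integral_Ioo_oddGauss (j : ℕ) {a b : ℝ} (hab : a ≤ b) :
    ∫ x in Ioo a b, oddGauss j x = oddGaussTail j a - oddGaussTail j b := by
  rw [← integral_Ioc_eq_integral_Ioo, ← intervalIntegral.integral_of_le hab,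
    ← intervalIntegral.integral_Ioi_sub_Ioi (integrable_oddGauss j).integrableOn hab,
    integral_Ioi_oddGauss, integral_Ioi_oddGauss]

theorem integral_oddGauss_interlacing (s : ℕ → ℝ) (j i : ℕ)
    (hi : 0 < i → s (i + 1) ≤ s i) :
    ∫ x in {x | s (i + 1) < x ∧ (0 < i → x < s i)}, oddGauss j x =
      oddGaussTail j (s (i + 1)) - if i = 0 then 0 else oddGaussTail j (s i) := by
  rcases Nat.eq_zero_or_pos i with rfl | hpos
  · have hIoi : {x | s (0 + 1) < x ∧ (0 < 0 → x < s 0)} = Ioi (s 1) := by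
      ext x
      simp
    rw [hIoi, integral_Ioi_oddGauss, if_pos rfl, sub_zero]
  · have hIoo : {x | s (i + 1) < x ∧ (0 < i → x < s i)} = Ioo (s (i + 1)) (s i) := by
      ext x
      simp [hpos]
    rw [hIoo, integral_Ioo_oddGauss j (hi hpos), if_neg hpos.ne']

theorem integral_interlacing_odd_factor (m : ℕ) (s : ℕ → ℝ)
    (hdec : ∀ i, 1 ≤ i → i < m → s (i + 1) ≤ s i) :
    ∫ t in {t : Fin m → ℝ | ∀ i : Fin m,
        s ((i : ℕ) + 1) < t i ∧ (0 < (i : ℕ) → t i < s (i : ℕ))},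
      (∏ k : Fin m, t k * Real.exp (-(t k) ^ 2 / 2)) *
        ∏ k : Fin m, ∏ j ∈ Finset.Iio k, ((t j) ^ 2 - (t k) ^ 2) =
      (∏ k : Fin m, Real.exp (-(s (k + 1)) ^ 2 / 2)) *
        ∏ k : Fin m, ∏ j ∈ Finset.Iio k, ((s (j + 1)) ^ 2 - (s (k + 1)) ^ 2) := by
  set I : Fin m → Set ℝ := fun i => {x | s (i + 1) < x ∧ (0 < (i : ℕ) → x < s i)}
  -- `tail 0 = 0` is the tail integral from `s 0 = ∞`
  set tail : ℕ → Fin m → ℝ := fun n j => if n = 0 then 0 else oddGaussTail j (s n)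
  have hregion : {t : Fin m → ℝ | ∀ i : Fin m,
      s ((i : ℕ) + 1) < t i ∧ (0 < (i : ℕ) → t i < s (i : ℕ))} = univ.pi I := by
    ext t
    simp [I]
  rw [hregion]
  calc _ = ∫ t in univ.pi I, (Matrix.of fun i j : Fin m => oddGauss j (t i)).det := by
        simp_rw [det_oddGauss]
    _ = (Matrix.of fun i j : Fin m => ∫ x in I i, oddGauss j x).det :=
        setIntegral_univ_pi_det I _ fun _ _ => (integrable_oddGauss _).integrableOn
    _ = (Matrix.of fun i j : Fin m => tail (i + 1) j - tail i j).det := by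
        congr 1 with i j
        simp only [Matrix.of_apply, I]
        rw [integral_oddGauss_interlacing s j i fun hi => hdec i hi i.isLt]
        simp [tail]
    _ = (Matrix.of fun i j : Fin m => oddGaussTail j (s (i + 1))).det := by
        rw [Matrix.det_of_sub_succ tail (funext fun _ => if_pos rfl)]
        simp [tail]
    _ = _ := det_oddGaussTail fun i => s (i + 1)

theorem gauss_even_decimation_density_general (m : ℕ) (s : ℕ → ℝ)
    (hdec : ∀ i, 1 ≤ i → i < m → s (i + 1) ≤ s i) :
    (∏ k ∈ Finset.Icc 1 m, Real.exp (-(s k) ^ 2 / 2)) *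
      (∏ k ∈ Finset.Icc 1 m, ∏ j ∈ Finset.Ico 1 k, ((s j) ^ 2 - (s k) ^ 2)) *
      (∫ t in {t : Fin m → ℝ | ∀ i : Fin m,
          s ((i : ℕ) + 1) < t i ∧ (0 < (i : ℕ) → t i < s (i : ℕ))},
        (∏ k : Fin m, t k * Real.exp (-(t k) ^ 2 / 2)) *
          ∏ k : Fin m, ∏ j ∈ Finset.Iio k, ((t j) ^ 2 - (t k) ^ 2)) =
    (∏ k ∈ Finset.Icc 1 m, Real.exp (-(s k) ^ 2)) *
      ∏ k ∈ Finset.Icc 1 m, ∏ j ∈ Finset.Ico 1 k, ((s j) ^ 2 - (s k) ^ 2) ^ 2 := by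
  have hexp (x : ℝ) : Real.exp (-x ^ 2) = Real.exp (-x ^ 2 / 2) ^ 2 := by
    rw [← Real.exp_nat_mul]
    ring_nf
  rw [integral_interlacing_odd_factor m s hdec]
  simp_rw [Finset.prod_Icc_one_prod_Ico_one_eq_prod_fin, Finset.prod_Icc_one_eq_prod_fin, hexp,
    Finset.prod_pow]
  ring

/-- Gauss case of Theorem 1.1, even order `n = 2m`, at the level of densities:
multiplying the even-indexed factor by the integral of the odd-indexed factor over the
interlacing region gives the chiral-unitary density `∏ e^{-s_k²} Δ(s²)²`. -/
theorem gauss_even_decimation_density (m : ℕ) (hm : 1 ≤ m) (s : ℕ → ℝ)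
    (hdec : ∀ i, 1 ≤ i → i < m → s (i + 1) ≤ s i) (hsm : 0 ≤ s m) :
    (∏ k ∈ Finset.Icc 1 m, Real.exp (-(s k) ^ 2 / 2)) *
      (∏ k ∈ Finset.Icc 1 m, ∏ j ∈ Finset.Ico 1 k, ((s j) ^ 2 - (s k) ^ 2)) *
      (∫ t in {t : Fin m → ℝ | ∀ i : Fin m,
          s ((i : ℕ) + 1) < t i ∧ (0 < (i : ℕ) → t i < s (i : ℕ))},
        (∏ k : Fin m, t k * Real.exp (-(t k) ^ 2 / 2)) *
          ∏ k : Fin m, ∏ j ∈ Finset.Iio k, ((t j) ^ 2 - (t k) ^ 2)) =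
    (∏ k ∈ Finset.Icc 1 m, Real.exp (-(s k) ^ 2)) *
      ∏ k ∈ Finset.Icc 1 m, ∏ j ∈ Finset.Ico 1 k, ((s j) ^ 2 - (s k) ^ 2) ^ 2 :=
  gauss_even_decimation_density_general m s hdec
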